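/- arXiv:2311.06608 — 2 statements merged into one kernel-verified Lean document; each statement's English description precedes it below -/
import Mathlib

section
/- Let α > 0, ρ > 0, let g and f be nonnegative locally integrable functions on [0, t_f) (t_f ≤ ∞), and let h be a nonnegative, nondecreasing, continuous function on [0, t_f) with h(t) ≤ L for some constant L. If g(t) ≤ f(t) + h(t) ∫₀ᵗ e^{−ρ(t−s)} (t−s)^{α−1} g(s) ds for all t ∈ [0, t_f), and in addition f is nondecreasing on [0, t_f), then g(t) ≤ f(t) E_α(h(t) Γ(α) t^α) for all t ∈ [0, t_f). -/
open MeasureTheory Real Set Filter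
open scoped ENNReal


lemma gamma_lb {K x : ℝ} (hK : 1 ≤ K) (hx : 1 ≤ x) :
    K ^ (x - 1) / Real.exp K ≤ Real.Gamma (x + 1) := by
  have hx0 : (0:ℝ) ≤ x := by linarith
  set m : ℕ := ⌊x⌋₊ with hm
  have hm1 : 1 ≤ m := (Nat.one_le_floor_iff x).mpr (by exact_mod_cast hx)
  have hmx : (m : ℝ) ≤ x := Nat.floor_le hx0
  have hxm : x - 1 < (m : ℝ) := Nat.sub_one_lt_floor x
  have hKpos : (0:ℝ) < K := by linarith
  have hexp : (0:ℝ) < Real.exp K := Real.exp_pos K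
  have h1 : K ^ (x - 1) ≤ K ^ (m : ℝ) :=
    Real.rpow_le_rpow_of_exponent_le hK (le_of_lt hxm)
  have h2 : K ^ m / (m.factorial : ℝ) ≤ Real.exp K := by
    refine le_trans ?_ (Real.sum_le_exp_of_nonneg (le_of_lt hKpos) (m + 1))
    refine Finset.single_le_sum (f := fun i => K ^ i / (i.factorial : ℝ)) ?_ ?_
    · intro i _; positivity
    · exact Finset.self_mem_range_succ m
  have hfacpos : (0:ℝ) < (m.factorial : ℝ) := by exact_mod_cast m.factorial_pos
  have h2' : K ^ m / Real.exp K ≤ (m.factorial : ℝ) := by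
    rw [div_le_iff₀ hexp]
    rw [div_le_iff₀ hfacpos] at h2
    nlinarith [h2]
  have h3 : (m.factorial : ℝ) ≤ Real.Gamma (x + 1) := by
    rw [← Real.Gamma_nat_eq_factorial]
    refine Real.Gamma_strictMonoOn_Ici.monotoneOn ?_ ?_ (by linarith)
    · simp only [mem_Ici]
      have : (1:ℝ) ≤ (m:ℝ) := by exact_mod_cast hm1
      linarith
    · simp only [mem_Ici]; linarith
  calc K ^ (x - 1) / Real.exp K ≤ K ^ (m:ℝ) / Real.exp K := by
        gcongr
    _ = K ^ m / Real.exp K := by rw [Real.rpow_natCast]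
    _ ≤ (m.factorial : ℝ) := h2'
    _ ≤ Real.Gamma (x + 1) := h3


lemma gamma_pos_ml {α : ℝ} (hα : 0 < α) (n : ℕ) : 0 < Real.Gamma (α * n + 1) :=
  Real.Gamma_pos_of_pos (by positivity)

lemma summable_ml {α : ℝ} (hα : 0 < α) {y : ℝ} (hy : 0 ≤ y) :
    Summable (fun n : ℕ => ((n : ℝ) + 1) * y ^ n / Real.Gamma (α * n + 1)) := by
  set K : ℝ := max 1 ((2 * y + 1) ^ (1/α)) with hKdef
  have hK1 : 1 ≤ K := le_max_left _ _
  have hKpos : (0:ℝ) < K := by linarith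
  have hy1 : (0:ℝ) < 2 * y + 1 := by linarith
  have hKα : 2 * y + 1 ≤ K ^ α := by
    calc 2 * y + 1 = ((2 * y + 1) ^ (1/α)) ^ α := by
          rw [← Real.rpow_mul hy1.le, one_div_mul_cancel hα.ne', Real.rpow_one]
    _ ≤ K ^ α := Real.rpow_le_rpow (Real.rpow_nonneg hy1.le _) (le_max_right _ _) hα.le
  have hKαpos : (0:ℝ) < K ^ α := Real.rpow_pos_of_pos hKpos α
  set r : ℝ := y / K ^ α with hrdef
  have hr0 : 0 ≤ r := div_nonneg hy hKαpos.le
  have hr2 : r ≤ 1/2 := by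
    rw [hrdef, div_le_div_iff₀ hKαpos (by norm_num : (0:ℝ) < 2)]
    nlinarith
  set C : ℝ := Real.exp K * K with hCdef
  have hCpos : 0 < C := by positivity
  -- the bound for n with 1 ≤ α * n
  have hbound : ∀ n : ℕ, 1 ≤ α * n →
      ((n : ℝ) + 1) * y ^ n / Real.Gamma (α * n + 1) ≤ C * (((n:ℝ)+1) * (1/2:ℝ)^n) := by
    intro n hn
    have hgam := gamma_lb hK1 hn
    have hden : (0:ℝ) < K ^ (α * (n:ℝ) - 1) / Real.exp K := by positivity
    have e1 : K ^ (α*(n:ℝ)) = (K^α)^n := by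
      rw [Real.rpow_mul hKpos.le, Real.rpow_natCast]
    have e2 : K ^ (α*(n:ℝ) - 1) = (K^α)^n / K := by
      rw [Real.rpow_sub hKpos, Real.rpow_one, e1]
    have hKαn : (0:ℝ) < (K^α)^n := pow_pos hKαpos n
    calc ((n : ℝ) + 1) * y ^ n / Real.Gamma (α * n + 1)
        ≤ ((n : ℝ) + 1) * y ^ n / (K ^ (α * (n:ℝ) - 1) / Real.exp K) :=
          div_le_div_of_nonneg_left (by positivity) hden hgam
      _ = C * (((n:ℝ)+1) * r^n) := by
          rw [e2, hrdef, div_pow, hCdef]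
          field_simp
      _ ≤ C * (((n:ℝ)+1) * (1/2:ℝ)^n) := by
          have : r^n ≤ (1/2:ℝ)^n := pow_le_pow_left₀ hr0 hr2 n
          have hn1 : (0:ℝ) ≤ (n:ℝ)+1 := by positivity
          have := mul_le_mul_of_nonneg_left this hn1
          nlinarith [this]
  have hgeo : Summable (fun n : ℕ => C * (((n:ℝ)+1) * (1/2:ℝ)^n)) := by
    apply Summable.mul_left
    have h1 : Summable (fun n : ℕ => (n:ℝ)^1 * (1/2:ℝ)^n) :=
      summable_pow_mul_geometric_of_norm_lt_one 1 (by norm_num)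
    have h2 : Summable (fun n : ℕ => (1/2:ℝ)^n) :=
      summable_geometric_of_lt_one (by norm_num) (by norm_num)
    simpa [add_mul, pow_one, one_mul] using h1.add h2
  set n₀ : ℕ := ⌈1/α⌉₊ with hn₀
  rw [← summable_nat_add_iff n₀]
  apply Summable.of_nonneg_of_le
  · intro n
    exact div_nonneg (by positivity) (gamma_pos_ml hα _).le
  · intro n
    apply hbound
    have h1 : (1/α : ℝ) ≤ n₀ := Nat.le_ceil _
    have h2 : (n₀ : ℝ) ≤ ((n + n₀ : ℕ) : ℝ) := by exact_mod_cast Nat.le_add_left n₀ n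
    rw [← div_le_iff₀' hα]
    linarith
  · exact (summable_nat_add_iff n₀).mpr hgeo


lemma beta_eqOn {a b : ℝ} : ∀ x ∈ Icc (0:ℝ) 1,
    ((x:ℂ) ^ ((a:ℂ)-1) * ((1:ℂ)-x) ^ ((b:ℂ)-1)) = ((x ^ (a-1) * (1-x) ^ (b-1) : ℝ) : ℂ) := by
  intro x hx
  have h1 : ((x ^ (a-1) : ℝ) : ℂ) = (x:ℂ) ^ ((a:ℂ)-1) := by
    rw [Complex.ofReal_cpow hx.1]
    norm_num
  have h2 : (((1-x) ^ (b-1) : ℝ) : ℂ) = ((1:ℂ)-x) ^ ((b:ℂ)-1) := by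
    rw [Complex.ofReal_cpow (by linarith [hx.2])]
    norm_num
  push_cast
  rw [h1, h2]

lemma betaIntegrable {a b : ℝ} (ha : 0 < a) (hb : 0 < b) :
    IntervalIntegrable (fun x => x ^ (a-1) * (1-x) ^ (b-1)) volume 0 1 := by
  have hC := Complex.betaIntegral_convergent (u := a) (v := b) (by simpa) (by simpa)
  rw [intervalIntegrable_iff_integrableOn_Ioc_of_le zero_le_one] at hC ⊢
  have := hC.re
  refine (IntegrableOn.congr_fun this ?_ measurableSet_Ioc)
  intro x hx
  have := beta_eqOn (a := a) (b := b) x (Ioc_subset_Icc_self hx)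
  simp [this]

lemma betaValue {a b : ℝ} (ha : 0 < a) (hb : 0 < b) :
    ∫ x in (0:ℝ)..1, x ^ (a-1) * (1-x) ^ (b-1) = Gamma a * Gamma b / Gamma (a+b) := by
  have key := Complex.Gamma_mul_Gamma_eq_betaIntegral (s := a) (t := b) (by simpa) (by simpa)
  have hbeta : Complex.betaIntegral a b = ((∫ x in (0:ℝ)..1, x ^ (a-1) * (1-x) ^ (b-1) : ℝ) : ℂ) := by
    rw [Complex.betaIntegral, ← intervalIntegral.integral_ofReal]
    refine intervalIntegral.integral_congr ?_
    intro x hx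
    rw [uIcc_of_le zero_le_one] at hx
    exact beta_eqOn x hx
  rw [hbeta, ← Complex.ofReal_add, Complex.Gamma_ofReal, Complex.Gamma_ofReal,
    Complex.Gamma_ofReal] at key
  have hG : (0:ℝ) < Gamma (a+b) := Real.Gamma_pos_of_pos (by linarith)
  have key' : Gamma a * Gamma b = Gamma (a+b) * ∫ x in (0:ℝ)..1, x ^ (a-1) * (1-x) ^ (b-1) := by
    exact_mod_cast key
  field_simp
  linarith [key']


lemma kernelIntegrable {p q u t : ℝ} (hp : 0 < p) (hq : 0 < q) (hut : u < t) :
    IntervalIntegrable (fun s => (t - s) ^ (p-1) * (s - u) ^ (q-1)) volume u t := by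
  set c := t - u with hc
  have hcpos : 0 < c := by simp [hc]; linarith
  have hφ := betaIntegrable hq hp
  have h1 : IntervalIntegrable (fun x => ((c⁻¹ * x) ^ (q-1) * (1 - c⁻¹ * x) ^ (p-1)))
      volume (0 / c⁻¹) (1 / c⁻¹) := hφ.comp_mul_left (c := c⁻¹)
  have h2 : IntervalIntegrable
      (fun s => ((c⁻¹ * (s - u)) ^ (q-1) * (1 - c⁻¹ * (s - u)) ^ (p-1)))
      volume (0 / c⁻¹ + u) (1 / c⁻¹ + u) := h1.comp_sub_right u
  have he0 : 0 / c⁻¹ + u = u := by simp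
  have he1 : 1 / c⁻¹ + u = t := by rw [one_div, inv_inv, hc]; ring
  rw [he0, he1] at h2
  have h3 := (h2.const_mul (c ^ (q-1) * c ^ (p-1)))
  rw [intervalIntegrable_iff_integrableOn_Ioc_of_le hut.le] at h3 ⊢
  refine h3.congr_fun ?_ measurableSet_Ioc
  intro s hs
  have hs1 : 0 ≤ s - u := by linarith [hs.1]
  have hs2 : 0 ≤ t - s := by linarith [hs.2]
  have key1 : c⁻¹ * (s - u) = (s - u) / c := by ring
  have key2 : 1 - (s - u) / c = (t - s) / c := by
    rw [eq_div_iff hcpos.ne', sub_mul, div_mul_cancel₀ _ hcpos.ne', one_mul, hc]; ring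
  simp only
  rw [key1, key2, Real.div_rpow hs1 hcpos.le, Real.div_rpow hs2 hcpos.le]
  have c1 : c ^ (q-1) ≠ 0 := (Real.rpow_pos_of_pos hcpos _).ne'
  have c2 : c ^ (p-1) ≠ 0 := (Real.rpow_pos_of_pos hcpos _).ne'
  field_simp

lemma kernelValue {p q u t : ℝ} (hp : 0 < p) (hq : 0 < q) (hut : u < t) :
    ∫ s in u..t, (t - s) ^ (p-1) * (s - u) ^ (q-1) =
      Gamma p * Gamma q / Gamma (p+q) * (t-u) ^ (p+q-1) := by
  set c := t - u with hc
  have hcpos : 0 < c := by simp [hc]; linarith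
  set k : ℝ → ℝ := fun s => (t - s) ^ (p-1) * (s - u) ^ (q-1) with hk
  have comp := intervalIntegral.integral_comp_mul_add (a := 0) (b := 1) (f := k)
      (c := c) hcpos.ne' u
  have he0 : c * 0 + u = u := by ring
  have he1 : c * 1 + u = t := by rw [mul_one, hc]; ring
  rw [he0, he1] at comp
  have hLHS : ∫ x in (0:ℝ)..1, k (c * x + u)
      = c ^ (p-1) * c ^ (q-1) * (Gamma q * Gamma p / Gamma (q+p)) := by
    rw [← betaValue hq hp, ← intervalIntegral.integral_const_mul]
    refine intervalIntegral.integral_congr ?_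
    intro x hx
    rw [uIcc_of_le zero_le_one] at hx
    have hx1 : 0 ≤ x := hx.1
    have hx2 : 0 ≤ 1 - x := by linarith [hx.2]
    have e1 : t - (c * x + u) = c * (1 - x) := by simp [hc]; ring
    have e2 : c * x + u - u = c * x := by ring
    simp only [hk, e1, e2]
    rw [Real.mul_rpow hcpos.le hx2, Real.mul_rpow hcpos.le hx1]
    ring
  rw [hLHS] at comp
  have hint : ∫ s in u..t, k s
      = c * (c ^ (p-1) * c ^ (q-1) * (Gamma q * Gamma p / Gamma (q+p))) := by
    rw [comp, smul_eq_mul, ← mul_assoc, mul_inv_cancel₀ hcpos.ne', one_mul]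
  have hpow : c * (c ^ (p-1) * c ^ (q-1)) = c ^ (p+q-1) := by
    nth_rewrite 1 [← Real.rpow_one c]
    rw [← Real.rpow_add hcpos, ← Real.rpow_add hcpos]
    ring_nf
  calc ∫ s in u..t, k s
      = (c * (c ^ (p-1) * c ^ (q-1))) * (Gamma q * Gamma p / Gamma (q+p)) := by
        rw [hint]; ring
    _ = c ^ (p+q-1) * (Gamma q * Gamma p / Gamma (q+p)) := by rw [hpow]
    _ = Gamma p * Gamma q / Gamma (p+q) * (t-u) ^ (p+q-1) := by
        rw [add_comm q p, hc]; ring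

lemma lintegral_beta_kernel {p q u t : ℝ} (hp : 0 < p) (hq : 0 < q) (hut : u < t) :
    ∫⁻ s in Ioc u t, ENNReal.ofReal ((t - s) ^ (p-1) * (s - u) ^ (q-1)) =
      ENNReal.ofReal (Gamma p * Gamma q / Gamma (p+q) * (t-u) ^ (p+q-1)) := by
  have hInt : IntegrableOn (fun s => (t - s) ^ (p-1) * (s - u) ^ (q-1)) (Ioc u t) volume := by
    have := kernelIntegrable hp hq hut
    rwa [intervalIntegrable_iff_integrableOn_Ioc_of_le hut.le] at this
  have hnn : 0 ≤ᵐ[volume.restrict (Ioc u t)] fun s => (t - s) ^ (p-1) * (s - u) ^ (q-1) := by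
    filter_upwards [ae_restrict_mem measurableSet_Ioc] with s hs
    have hs1 : 0 ≤ s - u := by linarith [hs.1]
    have hs2 : 0 ≤ t - s := by linarith [hs.2]
    positivity
  rw [← ofReal_integral_eq_lintegral_ofReal hInt hnn, ← intervalIntegral.integral_of_le hut.le,
    kernelValue hp hq hut]

lemma lintegral_pow_kernel {p t : ℝ} (hp : 0 < p) (ht : 0 ≤ t) :
    ∫⁻ s in Ioc 0 t, ENNReal.ofReal ((t - s) ^ (p-1)) = ENNReal.ofReal (t ^ p / p) := by
  rcases eq_or_lt_of_le ht with h | h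
  · simp [← h, Real.zero_rpow hp.ne']
  · have hInt : IntegrableOn (fun s => (t - s) ^ (p-1)) (Ioc 0 t) volume := by
      have h1 := (intervalIntegral.intervalIntegrable_rpow' (r := p - 1)
        (by linarith) (a := t) (b := 0)).comp_sub_left t
      have : t - t = 0 := by ring
      rw [this, sub_zero] at h1
      rwa [intervalIntegrable_iff_integrableOn_Ioc_of_le h.le] at h1
    have hnn : 0 ≤ᵐ[volume.restrict (Ioc 0 t)] fun s => (t - s) ^ (p-1) := by
      filter_upwards [ae_restrict_mem measurableSet_Ioc] with s hs
      have : 0 ≤ t - s := by linarith [hs.2]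
      positivity
    rw [← ofReal_integral_eq_lintegral_ofReal hInt hnn, ← intervalIntegral.integral_of_le h.le]
    have hval : ∫ s in (0:ℝ)..t, (t - s) ^ (p-1) = t ^ p / p := by
      rw [intervalIntegral.integral_comp_sub_left (fun y => y ^ (p-1)) t]
      rw [sub_zero, sub_self]
      rw [integral_rpow (Or.inl (by linarith))]
      have he : p - 1 + 1 = p := by ring
      rw [he, Real.zero_rpow hp.ne']
      ring
    rw [hval]

/-- The one-parameter Mittag-Leffler function `E_α(s) = ∑ₙ sⁿ / Γ(αn+1)`. -/
noncomputable def mittagLeffler (α s : ℝ) : ℝ :=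
  ∑' n : ℕ, s ^ n / Real.Gamma (α * n + 1)

set_option maxHeartbeats 1000000 in
/-- **Tempered fractional Grönwall inequality (Mittag-Leffler form).**
Under the hypotheses of the tempered Grönwall inequality, if in addition `f` is
nondecreasing on `[0, t_f)`, then `g t ≤ f t * E_α (h t * Γ α * t^α)` on `[0, t_f)`. -/
theorem tempered_gronwall_mittagLeffler
    (α ρ : ℝ) (hα : 0 < α) (hρ : 0 < ρ)
    (tf : EReal) (g f h : ℝ → ℝ) (L : ℝ)
    (I : Set ℝ) (hI : I = {t : ℝ | 0 ≤ t ∧ (t : EReal) < tf})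
    (hg_nonneg : ∀ t ∈ I, 0 ≤ g t)
    (hf_nonneg : ∀ t ∈ I, 0 ≤ f t)
    (hg_loc : LocallyIntegrableOn g I)
    (hf_loc : LocallyIntegrableOn f I)
    (hh_nonneg : ∀ t ∈ I, 0 ≤ h t)
    (hh_mono : MonotoneOn h I)
    (hh_cont : ContinuousOn h I)
    (hh_bdd : ∀ t ∈ I, h t ≤ L)
    (hyp : ∀ t ∈ I,
      g t ≤ f t + h t * ∫ s in (0:ℝ)..t, Real.exp (-ρ * (t - s)) * (t - s) ^ (α - 1) * g s)
    (hf_mono : MonotoneOn f I) :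
    ∀ t ∈ I, g t ≤ f t * mittagLeffler α (h t * Real.Gamma α * t ^ α) := by
  subst hI
  have hGα : 0 < Real.Gamma α := Real.Gamma_pos_of_pos hα
  intro t₀ ht₀
  obtain ⟨ht₀0, ht₀f⟩ := ht₀
  have ht₀mem : t₀ ∈ {t : ℝ | 0 ≤ t ∧ (t : EReal) < tf} := ⟨ht₀0, ht₀f⟩
  -- dispose of the case t₀ = 0
  rcases eq_or_lt_of_le ht₀0 with h00 | ht₀pos
  · subst h00
    have hML : mittagLeffler α (h 0 * Real.Gamma α * (0:ℝ) ^ α) = 1 := by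
      rw [Real.zero_rpow hα.ne', mul_zero, mittagLeffler]
      rw [tsum_eq_single 0 (fun k hk => by simp [zero_pow hk])]
      norm_num [Real.Gamma_one]
    have hg0 : g 0 ≤ f 0 := by simpa using hyp 0 ht₀mem
    rw [hML, mul_one]; exact hg0
  -- main case
  set H : ℝ := h t₀ with hHdef
  have hH0 : 0 ≤ H := hh_nonneg t₀ ht₀mem
  set x : ℝ := H * Real.Gamma α * t₀ ^ α with hxdef
  have ht₀α : (0:ℝ) ≤ t₀ ^ α := Real.rpow_nonneg ht₀0 α
  have hx0 : 0 ≤ x := by positivity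
  have hsum' := summable_ml hα hx0
  have hterm_nonneg : ∀ k : ℕ, 0 ≤ x ^ k / Real.Gamma (α * k + 1) := fun k =>
    div_nonneg (pow_nonneg hx0 k) (gamma_pos_ml hα k).le
  have hsum : Summable (fun k : ℕ => x ^ k / Real.Gamma (α * k + 1)) := by
    refine Summable.of_nonneg_of_le hterm_nonneg (fun k => ?_) hsum'
    have h1 : (0:ℝ) ≤ (k:ℝ) := Nat.cast_nonneg k
    have h2 : (0:ℝ) ≤ x ^ k := pow_nonneg hx0 k
    have := gamma_pos_ml hα k
    gcongr
    nlinarith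
  have hE0 : 0 ≤ mittagLeffler α x := tsum_nonneg hterm_nonneg
  have hpartial : ∀ n : ℕ, ∑ k ∈ Finset.range n, x ^ k / Real.Gamma (α * k + 1)
      ≤ mittagLeffler α x := fun n => hsum.sum_le_tsum _ (fun k _ => hterm_nonneg k)
  have hf0 : 0 ≤ f t₀ := hf_nonneg t₀ ht₀mem
  refine (ENNReal.ofReal_le_ofReal_iff (mul_nonneg hf0 hE0)).1 ?_
  rw [ENNReal.ofReal_mul hf0]
  -- setup
  set A : Set ℝ := Ioc (0:ℝ) t₀ with hAdef
  have hIccI : Icc (0:ℝ) t₀ ⊆ {t : ℝ | 0 ≤ t ∧ (t : EReal) < tf} := by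
    intro s hs
    exact ⟨hs.1, lt_of_le_of_lt (EReal.coe_le_coe_iff.2 hs.2) ht₀f⟩
  have hmemI : ∀ s ∈ Icc (0:ℝ) t₀, s ∈ {t : ℝ | 0 ≤ t ∧ (t:EReal) < tf} := fun s hs => hIccI hs
  have hgIcc : IntegrableOn g (Icc 0 t₀) volume :=
    hg_loc.integrableOn_compact_subset hIccI isCompact_Icc
  have hgA : IntegrableOn g A volume := hgIcc.mono_set Ioc_subset_Icc_self
  have hgm : AEMeasurable g (volume.restrict A) := hgA.aemeasurable
  set g₀ : ℝ → ℝ := hgm.mk g with hg₀def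
  have hg₀m : Measurable g₀ := hgm.measurable_mk
  have hg₀e : g =ᵐ[volume.restrict A] g₀ := hgm.ae_eq_mk
  set G₀ : ℝ → ℝ≥0∞ := fun s => ENNReal.ofReal (g₀ s) with hG₀def
  have hG₀m : Measurable G₀ := hg₀m.ennreal_ofReal
  have hres : ∀ t, t ≤ t₀ →
      (fun s => ENNReal.ofReal (g s)) =ᵐ[volume.restrict (Ioc 0 t)] G₀ := by
    intro t ht
    have hle : volume.restrict (Ioc (0:ℝ) t) ≤ volume.restrict A :=
      Measure.restrict_mono (Ioc_subset_Ioc_right ht) le_rfl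
    exact (hg₀e.fun_comp ENNReal.ofReal).filter_mono (ae_mono hle)
  -- key pointwise hypothesis in ℝ≥0∞
  have key : ∀ t ∈ Icc (0:ℝ) t₀, ENNReal.ofReal (g t) ≤ ENNReal.ofReal (f t) +
      ENNReal.ofReal H * ∫⁻ s in Ioc 0 t, ENNReal.ofReal ((t - s) ^ (α - 1)) * G₀ s := by
    intro t ht
    have htI := hmemI t ht
    have hhtH : h t ≤ H := hh_mono htI ht₀mem ht.2
    have hht0 : 0 ≤ h t := hh_nonneg t htI
    set J : ℝ≥0∞ := ∫⁻ s in Ioc 0 t, ENNReal.ofReal ((t - s) ^ (α - 1)) * G₀ s with hJdef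
    have hnorm : (∫⁻ s in Ioc 0 t,
        ENNReal.ofReal ‖Real.exp (-ρ * (t - s)) * (t - s) ^ (α - 1) * g s‖) ≤ J := by
      have hJ' : J = ∫⁻ s in Ioc 0 t,
          ENNReal.ofReal ((t - s) ^ (α - 1)) * ENNReal.ofReal (g s) := by
        rw [hJdef]
        refine lintegral_congr_ae ?_
        filter_upwards [hres t ht.2] with s hs
        rw [hs]
      rw [hJ']
      refine lintegral_mono_ae ?_
      filter_upwards [ae_restrict_mem measurableSet_Ioc] with s hs
      have hsI := hmemI s ⟨hs.1.le, hs.2.trans ht.2⟩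
      have hg0s : 0 ≤ g s := hg_nonneg s hsI
      have hts : 0 ≤ t - s := by linarith [hs.2]
      have hk : 0 ≤ (t - s) ^ (α - 1) := Real.rpow_nonneg hts _
      have hexp1 : Real.exp (-ρ * (t - s)) ≤ 1 := by
        rw [Real.exp_le_one_iff]
        nlinarith [hρ.le]
      have hexp0 : 0 ≤ Real.exp (-ρ * (t - s)) := (Real.exp_pos _).le
      have habs : ‖Real.exp (-ρ * (t - s)) * (t - s) ^ (α - 1) * g s‖
          = Real.exp (-ρ * (t - s)) * (t - s) ^ (α - 1) * g s := by
        rw [Real.norm_eq_abs, abs_of_nonneg]; positivity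
      rw [habs, ← ENNReal.ofReal_mul hk]
      refine ENNReal.ofReal_le_ofReal ?_
      have h1 : Real.exp (-ρ * (t - s)) * (t - s) ^ (α - 1) ≤ (t - s) ^ (α - 1) :=
        mul_le_of_le_one_left hk hexp1
      exact mul_le_mul_of_nonneg_right h1 hg0s
    by_cases hJtop : J = ⊤
    · by_cases hHz : H = 0
      · have hht : h t = 0 := le_antisymm (hHz ▸ hhtH) hht0
        have h1 := hyp t htI
        rw [hht, zero_mul, add_zero] at h1
        exact le_trans (ENNReal.ofReal_le_ofReal h1) le_self_add
      · have hHpos : 0 < H := lt_of_le_of_ne hH0 (Ne.symm hHz)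
        have htop : ENNReal.ofReal H * J = ⊤ := by
          rw [hJtop, ENNReal.mul_top]
          simp only [ne_eq, ENNReal.ofReal_eq_zero, not_le]
          exact hHpos
        rw [htop, add_top]
        exact le_top
    · have htoR : (∫ s in (0:ℝ)..t, Real.exp (-ρ * (t - s)) * (t - s) ^ (α - 1) * g s)
          ≤ J.toReal := by
        rw [intervalIntegral.integral_of_le ht.1]
        calc ∫ s in Ioc 0 t, Real.exp (-ρ * (t - s)) * (t - s) ^ (α - 1) * g s
            ≤ ‖∫ s in Ioc 0 t, Real.exp (-ρ * (t - s)) * (t - s) ^ (α - 1) * g s‖ :=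
              le_abs_self _
          _ ≤ (∫⁻ s in Ioc 0 t,
              ENNReal.ofReal ‖Real.exp (-ρ * (t - s)) * (t - s) ^ (α - 1) * g s‖).toReal :=
              norm_integral_le_lintegral_norm _
          _ ≤ J.toReal := ENNReal.toReal_mono hJtop hnorm
      have hgt : g t ≤ f t + H * J.toReal := by
        have h1 := hyp t htI
        have h2 : h t * (∫ s in (0:ℝ)..t, Real.exp (-ρ * (t - s)) * (t - s) ^ (α - 1) * g s)
            ≤ H * J.toReal := by
          calc h t * (∫ s in (0:ℝ)..t, Real.exp (-ρ * (t - s)) * (t - s) ^ (α - 1) * g s)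
              ≤ h t * J.toReal := mul_le_mul_of_nonneg_left htoR hht0
            _ ≤ H * J.toReal := mul_le_mul_of_nonneg_right hhtH ENNReal.toReal_nonneg
        linarith
      calc ENNReal.ofReal (g t) ≤ ENNReal.ofReal (f t + H * J.toReal) :=
            ENNReal.ofReal_le_ofReal hgt
        _ = ENNReal.ofReal (f t) + ENNReal.ofReal (H * J.toReal) :=
            ENNReal.ofReal_add (hf_nonneg t htI) (by positivity)
        _ = ENNReal.ofReal (f t) + ENNReal.ofReal H * ENNReal.ofReal (J.toReal) := by
            rw [ENNReal.ofReal_mul hH0]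
        _ ≤ ENNReal.ofReal (f t) + ENNReal.ofReal H * J := by
            gcongr
            exact ENNReal.ofReal_toReal_le
  -- coefficient positivity
  have hcoef_pos : ∀ n : ℕ, 1 ≤ n → 0 < Real.Gamma (α * n) := by
    intro n hn
    have h1 : (1:ℝ) ≤ (n:ℝ) := by exact_mod_cast hn
    exact Real.Gamma_pos_of_pos (by nlinarith)
  have hG₀top : ∀ s, G₀ s ≠ ⊤ := fun s => ENNReal.ofReal_ne_top
  -- main induction
  have hP : ∀ n : ℕ, 1 ≤ n → ∀ t ∈ Icc (0:ℝ) t₀,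
      ENNReal.ofReal (g t) ≤
        ENNReal.ofReal (f t) *
          (∑ k ∈ Finset.range n,
            ENNReal.ofReal ((H * Real.Gamma α) ^ k * t ^ (α * k) / Real.Gamma (α * k + 1))) +
        ENNReal.ofReal (H ^ n * Real.Gamma α ^ n / Real.Gamma (α * n)) *
          ∫⁻ s in Ioc 0 t, ENNReal.ofReal ((t - s) ^ (α * n - 1)) * G₀ s := by
    intro n hn
    induction n, hn using Nat.le_induction with
    | base =>
      intro t ht
      have hkey := key t ht
      have e1 : (∑ k ∈ Finset.range 1,
          ENNReal.ofReal ((H * Real.Gamma α) ^ k * t ^ (α * k) / Real.Gamma (α * k + 1)))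
          = 1 := by
        rw [Finset.sum_range_one]
        norm_num [Real.rpow_zero, Real.Gamma_one]
      have e2 : ENNReal.ofReal (H ^ 1 * Real.Gamma α ^ 1 / Real.Gamma (α * (1:ℕ))) =
          ENNReal.ofReal H := by
        norm_num
        rw [mul_div_assoc, div_self hGα.ne', mul_one]
      rw [e1, e2, mul_one]
      have e3 : α * ((1:ℕ):ℝ) - 1 = α - 1 := by norm_num
      rw [e3]
      exact hkey
    | succ n hn ih =>
      intro t ht
      have htI := hmemI t ht
      have hn1 : (1:ℝ) ≤ (n:ℝ) := by exact_mod_cast hn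
      have hαn : (0:ℝ) < α * n := by nlinarith
      have hΓn : 0 < Real.Gamma (α * n) := hcoef_pos n hn
      have hΓsn : 0 < Real.Gamma (α * n + α) := Real.Gamma_pos_of_pos (by nlinarith)
      set Cf : ℝ≥0∞ := ENNReal.ofReal (f t) with hCf
      set cH : ℝ≥0∞ := ENNReal.ofReal H with hcH
      set cPn : ℝ≥0∞ := ENNReal.ofReal (H ^ n * Real.Gamma α ^ n / Real.Gamma (α * n)) with hcPn
      set Kn : ℝ → ℝ≥0∞ := fun s => ENNReal.ofReal ((t - s) ^ (α * n - 1)) with hKn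
      have hKnm : Measurable Kn := by
        apply Measurable.ennreal_ofReal; fun_prop
      set inr : ℝ → ℝ≥0∞ :=
        fun s => ∫⁻ u in Ioc 0 s, ENNReal.ofReal ((s - u) ^ (α - 1)) * G₀ u with hinr
      -- a.e. bound for G₀ on Ioc 0 t
      have hae : ∀ᵐ s ∂(volume.restrict (Ioc 0 t)), G₀ s ≤ Cf + cH * inr s := by
        filter_upwards [ae_restrict_mem measurableSet_Ioc, hres t ht.2] with s hmem heq
        have hsIcc : s ∈ Icc (0:ℝ) t₀ := ⟨hmem.1.le, hmem.2.trans ht.2⟩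
        rw [← heq]
        refine (key s hsIcc).trans (add_le_add_left (ENNReal.ofReal_le_ofReal ?_) _)
        exact hf_mono (hmemI s hsIcc) htI hmem.2
      -- split step
      have hstep1 : (∫⁻ s in Ioc 0 t, Kn s * G₀ s)
          ≤ Cf * (∫⁻ s in Ioc 0 t, Kn s) + cH * ∫⁻ s in Ioc 0 t, Kn s * inr s := by
        calc (∫⁻ s in Ioc 0 t, Kn s * G₀ s)
            ≤ ∫⁻ s in Ioc 0 t, (Kn s * Cf + cH * (Kn s * inr s)) := by
              refine lintegral_mono_ae ?_
              filter_upwards [hae] with s hs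
              calc Kn s * G₀ s ≤ Kn s * (Cf + cH * inr s) := mul_le_mul_right hs _
                _ = Kn s * Cf + cH * (Kn s * inr s) := by ring
          _ = (∫⁻ s in Ioc 0 t, Kn s * Cf) + ∫⁻ s in Ioc 0 t, cH * (Kn s * inr s) :=
              lintegral_add_left (hKnm.mul_const _) _
          _ = Cf * (∫⁻ s in Ioc 0 t, Kn s) + cH * ∫⁻ s in Ioc 0 t, Kn s * inr s := by
              rw [lintegral_mul_const' Cf _ ENNReal.ofReal_ne_top,
                lintegral_const_mul' cH _ ENNReal.ofReal_ne_top, mul_comm _ Cf]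
      have hKnval : (∫⁻ s in Ioc 0 t, Kn s) = ENNReal.ofReal (t ^ (α * n) / (α * n)) :=
        lintegral_pow_kernel hαn ht.1
      -- Fubini setup
      set ψ : ℝ × ℝ → ℝ≥0∞ := fun q =>
        ENNReal.ofReal ((t - q.1) ^ (α * n - 1)) *
          (ENNReal.ofReal ((q.1 - q.2) ^ (α - 1)) * G₀ q.2) with hψ
      set Sset : Set (ℝ × ℝ) := {q : ℝ × ℝ | 0 < q.2 ∧ q.2 < q.1} with hSset
      have hSm : MeasurableSet Sset :=
        (measurableSet_lt measurable_const measurable_snd).inter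
          (measurableSet_lt measurable_snd measurable_fst)
      set Φ : ℝ × ℝ → ℝ≥0∞ := Sset.indicator ψ with hΦ
      have hψm : Measurable ψ := by
        apply Measurable.fun_mul
        · apply Measurable.ennreal_ofReal; fun_prop
        · apply Measurable.fun_mul
          · apply Measurable.ennreal_ofReal; fun_prop
          · exact hG₀m.comp measurable_snd
      have hΦm : Measurable Φ := hψm.indicator hSm
      have hW1 : (∫⁻ s in Ioc 0 t, Kn s * inr s)
          = ∫⁻ s in Ioc 0 t, ∫⁻ u in Ioc 0 t, Φ (s, u) := by
        refine setLIntegral_congr_fun measurableSet_Ioc (fun s hs => ?_)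
        have hIoo_sub : Ioo (0:ℝ) s ⊆ Ioc 0 t := fun u hu => ⟨hu.1, hu.2.le.trans hs.2⟩
        have e : ∀ u, Φ (s, u) = (Ioo (0:ℝ) s).indicator (fun u => ψ (s, u)) u := by
          intro u
          by_cases hu : u ∈ Ioo (0:ℝ) s
          · rw [hΦ, indicator_of_mem (show (s,u) ∈ Sset from ⟨hu.1, hu.2⟩),
              indicator_of_mem hu]
          · rw [hΦ, indicator_of_notMem (show (s,u) ∉ Sset from fun hc => hu ⟨hc.1, hc.2⟩),
              indicator_of_notMem hu]
        refine Eq.symm ?_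
        calc (∫⁻ u in Ioc 0 t, Φ (s, u))
            = ∫⁻ u in Ioc 0 t, (Ioo (0:ℝ) s).indicator (fun u => ψ (s, u)) u :=
              lintegral_congr fun u => e u
          _ = ∫⁻ u in Ioo (0:ℝ) s, ψ (s, u) ∂(volume.restrict (Ioc 0 t)) :=
              lintegral_indicator measurableSet_Ioo _
          _ = ∫⁻ u in Ioo (0:ℝ) s, ψ (s, u) := by
              rw [Measure.restrict_restrict measurableSet_Ioo,
                inter_eq_self_of_subset_left hIoo_sub]
          _ = ∫⁻ u in Ioc (0:ℝ) s, ψ (s, u) := by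
              rw [Measure.restrict_congr_set Ioo_ae_eq_Ioc]
          _ = Kn s * inr s := by
              rw [hinr, ← lintegral_const_mul' (Kn s) _ ENNReal.ofReal_ne_top]
      have hswap : (∫⁻ s in Ioc 0 t, ∫⁻ u in Ioc 0 t, Φ (s, u))
          = ∫⁻ u in Ioc 0 t, ∫⁻ s in Ioc 0 t, Φ (s, u) :=
        lintegral_lintegral_swap hΦm.aemeasurable
      have hne : ∀ᵐ u ∂(volume.restrict (Ioc (0:ℝ) t)), u ≠ t := by
        refine ae_iff.2 ?_
        have hsub : {u : ℝ | ¬ u ≠ t} ⊆ {t} := fun u hu => by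
          simp only [mem_setOf_eq, not_not] at hu; simp [hu]
        exact measure_mono_null hsub (by simp [Measure.restrict_apply'] <;> simp)
      have hW3 : (∫⁻ u in Ioc 0 t, ∫⁻ s in Ioc 0 t, Φ (s, u))
          = ENNReal.ofReal (Real.Gamma (α*n) * Real.Gamma α / Real.Gamma (α*n + α)) *
            ∫⁻ u in Ioc 0 t, ENNReal.ofReal ((t - u) ^ (α*n + α - 1)) * G₀ u := by
        rw [← lintegral_const_mul' _ _ ENNReal.ofReal_ne_top]
        refine lintegral_congr_ae ?_
        filter_upwards [ae_restrict_mem measurableSet_Ioc, hne] with u hu hut'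
        have hu2 : u < t := lt_of_le_of_ne hu.2 hut'
        have e' : ∀ s, Φ (s, u) = (Ioi u).indicator (fun s => ψ (s, u)) s := by
          intro s
          by_cases hsu : u < s
          · rw [hΦ, indicator_of_mem (show (s,u) ∈ Sset from ⟨hu.1, hsu⟩),
              indicator_of_mem (mem_Ioi.2 hsu)]
          · rw [hΦ, indicator_of_notMem (show (s,u) ∉ Sset from fun hc => hsu hc.2),
              indicator_of_notMem (by simpa using hsu)]
        have einter : Ioi u ∩ Ioc 0 t = Ioc u t := by
          ext s
          simp only [mem_inter_iff, mem_Ioi, mem_Ioc]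
          constructor
          · rintro ⟨h1, _, h3⟩; exact ⟨h1, h3⟩
          · rintro ⟨h1, h2⟩; exact ⟨h1, hu.1.trans h1, h2⟩
        calc (∫⁻ s in Ioc 0 t, Φ (s, u))
            = ∫⁻ s in Ioc 0 t, (Ioi u).indicator (fun s => ψ (s, u)) s :=
              lintegral_congr fun s => e' s
          _ = ∫⁻ s in Ioi u, ψ (s, u) ∂(volume.restrict (Ioc 0 t)) :=
              lintegral_indicator measurableSet_Ioi _
          _ = ∫⁻ s in Ioc u t, ψ (s, u) := by
              rw [Measure.restrict_restrict measurableSet_Ioi, einter]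
          _ = ∫⁻ s in Ioc u t, ENNReal.ofReal ((t-s)^(α*n-1) * (s-u)^(α-1)) * G₀ u := by
              refine setLIntegral_congr_fun measurableSet_Ioc (fun s hs => ?_)
              have h1 : 0 ≤ (t - s)^(α*(n:ℝ)-1) := Real.rpow_nonneg (by linarith [hs.2]) _
              rw [hψ]
              simp only
              rw [ENNReal.ofReal_mul h1, mul_assoc]
          _ = (∫⁻ s in Ioc u t, ENNReal.ofReal ((t-s)^(α*n-1) * (s-u)^(α-1))) * G₀ u :=
              lintegral_mul_const' _ _ (hG₀top u)
          _ = ENNReal.ofReal (Real.Gamma (α*n) * Real.Gamma α / Real.Gamma (α*n+α)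
                * (t-u)^(α*n+α-1)) * G₀ u := by
              rw [lintegral_beta_kernel hαn hα hu2]
          _ = ENNReal.ofReal (Real.Gamma (α*n) * Real.Gamma α / Real.Gamma (α*n+α)) *
              (ENNReal.ofReal ((t-u)^(α*n+α-1)) * G₀ u) := by
              rw [ENNReal.ofReal_mul (by positivity), mul_assoc]
      -- coefficient identities
      have hc1 : cPn * Cf * ENNReal.ofReal (t ^ (α * n) / (α * n)) =
          Cf * ENNReal.ofReal ((H * Real.Gamma α) ^ n * t ^ (α * n) / Real.Gamma (α * n + 1)) := by
        rw [mul_comm cPn Cf, mul_assoc, hcPn, ← ENNReal.ofReal_mul (by positivity)]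
        congr 1
        rw [Real.Gamma_add_one hαn.ne', mul_pow]
        field_simp
      have hc2 : cPn * (cH * ENNReal.ofReal
            (Real.Gamma (α*n) * Real.Gamma α / Real.Gamma (α*n + α))) =
          ENNReal.ofReal (H ^ (n+1) * Real.Gamma α ^ (n+1) / Real.Gamma (α * (n+1:ℕ))) := by
        rw [hcPn, hcH, ← ENNReal.ofReal_mul hH0, ← ENNReal.ofReal_mul (by positivity)]
        congr 1
        have ecast : α * ((n+1:ℕ):ℝ) = α * n + α := by push_cast; ring
        rw [ecast]
        field_simp
        ring
      have ecast2 : ∀ u : ℝ, (t - u) ^ (α*(n:ℝ) + α - 1) = (t - u) ^ (α * ((n+1:ℕ):ℝ) - 1) := by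
        intro u
        congr 1
        push_cast
        ring
      -- assemble
      have hWeq : (∫⁻ s in Ioc 0 t, Kn s * inr s)
          = ENNReal.ofReal (Real.Gamma (α*n) * Real.Gamma α / Real.Gamma (α*n + α)) *
            ∫⁻ u in Ioc 0 t, ENNReal.ofReal ((t - u) ^ (α * ((n+1:ℕ):ℝ) - 1)) * G₀ u := by
        rw [hW1, hswap, hW3]
        congr 1
        refine lintegral_congr fun u => ?_
        rw [ecast2 u]
      rw [Finset.sum_range_succ, mul_add]
      calc ENNReal.ofReal (g t)
          ≤ Cf * (∑ k ∈ Finset.range n,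
              ENNReal.ofReal ((H * Real.Gamma α) ^ k * t ^ (α * k) / Real.Gamma (α * k + 1))) +
            cPn * ∫⁻ s in Ioc 0 t, Kn s * G₀ s := ih t ht
        _ ≤ Cf * (∑ k ∈ Finset.range n,
              ENNReal.ofReal ((H * Real.Gamma α) ^ k * t ^ (α * k) / Real.Gamma (α * k + 1))) +
            cPn * (Cf * ENNReal.ofReal (t ^ (α * n) / (α * n)) +
              cH * ∫⁻ s in Ioc 0 t, Kn s * inr s) := by
            refine add_le_add_right (mul_le_mul_right ?_ cPn) _
            rw [← hKnval]
            exact hstep1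
        _ = Cf * (∑ k ∈ Finset.range n,
              ENNReal.ofReal ((H * Real.Gamma α) ^ k * t ^ (α * k) / Real.Gamma (α * k + 1))) +
            (cPn * Cf * ENNReal.ofReal (t ^ (α * n) / (α * n)) +
              (cPn * (cH * ENNReal.ofReal
                (Real.Gamma (α*n) * Real.Gamma α / Real.Gamma (α*n + α)))) *
              ∫⁻ u in Ioc 0 t, ENNReal.ofReal ((t - u) ^ (α * ((n+1:ℕ):ℝ) - 1)) * G₀ u) := by
            rw [hWeq]; ring
        _ = Cf * (∑ k ∈ Finset.range n,
              ENNReal.ofReal ((H * Real.Gamma α) ^ k * t ^ (α * k) / Real.Gamma (α * k + 1))) +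
            (Cf * ENNReal.ofReal ((H * Real.Gamma α) ^ n * t ^ (α * n) / Real.Gamma (α * n + 1)) +
              ENNReal.ofReal (H ^ (n+1) * Real.Gamma α ^ (n+1) / Real.Gamma (α * (n+1:ℕ))) *
              ∫⁻ u in Ioc 0 t, ENNReal.ofReal ((t - u) ^ (α * ((n+1:ℕ):ℝ) - 1)) * G₀ u) := by
            rw [hc1, hc2]
        _ = _ := by ring
  -- final limit argument
  have ht₀Icc : t₀ ∈ Icc (0:ℝ) t₀ := ⟨ht₀0, le_rfl⟩
  set M : ℝ≥0∞ := ∫⁻ s in A, G₀ s with hM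
  have hMfin : M ≠ ⊤ := by
    have hMeq : M = ENNReal.ofReal (∫ s in A, g s) := by
      rw [hM, ofReal_integral_eq_lintegral_ofReal hgA ?_]
      · exact (lintegral_congr_ae (hres t₀ le_rfl)).symm
      · filter_upwards [ae_restrict_mem measurableSet_Ioc] with s hs
        exact hg_nonneg s (hmemI s ⟨hs.1.le, hs.2⟩)
    rw [hMeq]; exact ENNReal.ofReal_ne_top
  have hSle : ∀ n : ℕ, (∑ k ∈ Finset.range n,
      ENNReal.ofReal ((H * Real.Gamma α) ^ k * t₀ ^ (α * k) / Real.Gamma (α * k + 1)))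
      ≤ ENNReal.ofReal (mittagLeffler α x) := by
    intro n
    have hterm_eq : ∀ k : ℕ,
        (H * Real.Gamma α) ^ k * t₀ ^ (α * (k:ℝ)) / Real.Gamma (α * k + 1)
          = x ^ k / Real.Gamma (α * k + 1) := by
      intro k
      have e1 : t₀ ^ (α * (k:ℝ)) = (t₀ ^ α) ^ k := by
        rw [← Real.rpow_natCast (t₀ ^ α) k, ← Real.rpow_mul ht₀0]
      rw [e1, hxdef, mul_pow, mul_pow]
      ring
    calc (∑ k ∈ Finset.range n,
        ENNReal.ofReal ((H * Real.Gamma α) ^ k * t₀ ^ (α * k) / Real.Gamma (α * k + 1)))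
        = ENNReal.ofReal (∑ k ∈ Finset.range n, x ^ k / Real.Gamma (α * k + 1)) := by
          rw [ENNReal.ofReal_sum_of_nonneg (fun i _ => hterm_nonneg i)]
          refine Finset.sum_congr rfl fun k _ => by rw [hterm_eq k]
      _ ≤ ENNReal.ofReal (mittagLeffler α x) := ENNReal.ofReal_le_ofReal (hpartial n)
  set d : ℕ → ℝ := fun n => (α / t₀) * ((n:ℝ) * x ^ n / Real.Gamma (α * n + 1)) with hd
  have hdt : Tendsto d atTop (nhds 0) := by
    have h1 : Tendsto (fun n : ℕ => ((n:ℝ)+1) * x ^ n / Real.Gamma (α*n+1)) atTop (nhds 0) :=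
      hsum'.tendsto_atTop_zero
    have h2 : Tendsto (fun n : ℕ => (n:ℝ) * x ^ n / Real.Gamma (α*n+1)) atTop (nhds 0) := by
      refine squeeze_zero (fun n => ?_) (fun n => ?_) h1
      · exact div_nonneg (by positivity) (gamma_pos_ml hα n).le
      · have := gamma_pos_ml hα n
        gcongr
        nlinarith [pow_nonneg hx0 n, Nat.cast_nonneg (α := ℝ) n]
    have h3 := h2.const_mul (α / t₀)
    simpa using h3
  have htendE : Tendsto (fun n => ENNReal.ofReal (d n) * M) atTop (nhds 0) := by
    have h1 : Tendsto (fun n => ENNReal.ofReal (d n)) atTop (nhds 0) := by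
      simpa [ENNReal.ofReal_zero] using ENNReal.tendsto_ofReal hdt
    have h2 := ENNReal.Tendsto.mul_const h1 (Or.inr hMfin)
    simpa using h2
  have hmain : ∀ n : ℕ, 1 ≤ n → 1 ≤ α * n →
      ENNReal.ofReal (g t₀) ≤ ENNReal.ofReal (f t₀) * ENNReal.ofReal (mittagLeffler α x) +
        ENNReal.ofReal (d n) * M := by
    intro n hn hαn1
    have hPn := hP n hn t₀ ht₀Icc
    have hΓn := hcoef_pos n hn
    have hrem : (∫⁻ s in Ioc 0 t₀, ENNReal.ofReal ((t₀ - s) ^ (α * n - 1)) * G₀ s)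
        ≤ ENNReal.ofReal (t₀ ^ (α * (n:ℝ) - 1)) * M := by
      rw [hM, hAdef, ← lintegral_const_mul' _ _ ENNReal.ofReal_ne_top]
      refine lintegral_mono_ae ?_
      filter_upwards [ae_restrict_mem measurableSet_Ioc] with s hs
      refine mul_le_mul_left (ENNReal.ofReal_le_ofReal ?_) _
      refine Real.rpow_le_rpow (by linarith [hs.2]) (by linarith [hs.1]) (by linarith)
    have hcoefeq : H ^ n * Real.Gamma α ^ n / Real.Gamma (α * n) * t₀ ^ (α * (n:ℝ) - 1)
        = d n := by
      rw [hd]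
      simp only
      rw [hxdef, mul_pow, mul_pow]
      have e1 : (t₀ ^ α) ^ n = t₀ ^ (α * (n:ℝ)) := by
        rw [← Real.rpow_natCast (t₀ ^ α) n, ← Real.rpow_mul ht₀0]
      have e2 : t₀ ^ (α * (n:ℝ) - 1) = t₀ ^ (α * (n:ℝ)) / t₀ := by
        rw [Real.rpow_sub ht₀pos, Real.rpow_one]
      have e3 : Real.Gamma (α * (n:ℝ) + 1) = α * n * Real.Gamma (α * n) :=
        Real.Gamma_add_one (by positivity)
      rw [e1, e2, e3]
      have ht₀ne : t₀ ≠ 0 := ht₀pos.ne'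
      field_simp
    calc ENNReal.ofReal (g t₀)
        ≤ ENNReal.ofReal (f t₀) *
            (∑ k ∈ Finset.range n,
              ENNReal.ofReal ((H * Real.Gamma α) ^ k * t₀ ^ (α * k) / Real.Gamma (α * k + 1))) +
          ENNReal.ofReal (H ^ n * Real.Gamma α ^ n / Real.Gamma (α * n)) *
            ∫⁻ s in Ioc 0 t₀, ENNReal.ofReal ((t₀ - s) ^ (α * n - 1)) * G₀ s := hPn
      _ ≤ ENNReal.ofReal (f t₀) * ENNReal.ofReal (mittagLeffler α x) +
          ENNReal.ofReal (H ^ n * Real.Gamma α ^ n / Real.Gamma (α * n)) *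
            (ENNReal.ofReal (t₀ ^ (α * (n:ℝ) - 1)) * M) :=
          add_le_add (mul_le_mul_right (hSle n) _) (mul_le_mul_right hrem _)
      _ = ENNReal.ofReal (f t₀) * ENNReal.ofReal (mittagLeffler α x) +
          ENNReal.ofReal (d n) * M := by
          have hmerge : ENNReal.ofReal (H ^ n * Real.Gamma α ^ n / Real.Gamma (α * (n:ℝ))) *
              ENNReal.ofReal (t₀ ^ (α * (n:ℝ) - 1)) = ENNReal.ofReal (d n) := by
            rw [← ENNReal.ofReal_mul (by positivity), hcoefeq]
          rw [← mul_assoc, hmerge]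
  refine ENNReal.le_of_forall_pos_le_add fun ε hε hlt => ?_
  have hev1 : ∀ᶠ n : ℕ in atTop, ENNReal.ofReal (d n) * M < (ε : ℝ≥0∞) :=
    htendE.eventually_lt_const (by exact_mod_cast hε)
  have hev2 : ∀ᶠ n : ℕ in atTop, 1 ≤ n ∧ 1 ≤ α * n := by
    refine eventually_atTop.2 ⟨max 1 ⌈1/α⌉₊, fun n hn => ⟨le_trans (le_max_left _ _) hn, ?_⟩⟩
    have h1 : (⌈1/α⌉₊:ℝ) ≤ (n:ℝ) := by
      exact_mod_cast le_trans (le_max_right _ _) hn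
    have h2 : 1/α ≤ (n:ℝ) := le_trans (Nat.le_ceil _) h1
    rw [div_le_iff₀ hα] at h2
    nlinarith
  obtain ⟨n, hn1, hn2, hn3⟩ := (hev1.and hev2).exists
  exact le_trans (hmain n hn2 hn3) (add_le_add_right hn1.le _)
end

section
/- Let α ∈ (0,1), ρ ∈ (0,1], T > 0, τ > 0, let A and B be n×n real matrices, let ω : [−τ, 0] → ℝⁿ be continuous, and let f : [0,T] × ℝⁿ × ℝⁿ → ℝⁿ be continuous with ‖f(t,u,v) − f(t,u′,v′)‖ ≤ L_f (‖u − u′‖ + ‖v − v′‖) for some constant L_f > 0 and all t ∈ [0,T], u, v, u′, v′ ∈ ℝⁿ. Then there exists exactly one continuous function y : [−τ, T] → ℝⁿ satisfying y(t) = ω(t) for t ∈ [−τ, 0] and y(t) = ω(0) e^{−ρt} + (1/Γ(α)) ∫₀ᵗ e^{−ρ(t−s)} e^{−ρs} (t−s)^{α−1} [A y(s) + B y(s−τ) + f(s, y(s), y(s−τ))] ds for t ∈ [0,T]. -/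
open MeasureTheory Real Set


-- aux 1: smul integrable
lemma aux_smul_intervalIntegrable {E : Type*} [NormedAddCommGroup E] [NormedSpace ℝ E]
    {k : ℝ → ℝ} {G : ℝ → E} {a b : ℝ}
    (hk : IntervalIntegrable k volume a b) (hG : ContinuousOn G (Set.uIcc a b)) :
    IntervalIntegrable (fun s => k s • G s) volume a b := by
  obtain ⟨C, hC⟩ := isCompact_uIcc.exists_bound_of_continuousOn hG
  rw [intervalIntegrable_iff] at hk ⊢
  have hmeas : AEStronglyMeasurable (fun s => k s • G s) (volume.restrict (Set.uIoc a b)) :=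
    hk.aestronglyMeasurable.smul
      ((hG.mono Set.uIoc_subset_uIcc).aestronglyMeasurable measurableSet_uIoc)
  refine ((hk.norm.const_mul C).mono' hmeas ?_)
  rw [ae_restrict_iff' measurableSet_uIoc]
  refine Filter.Eventually.of_forall fun s hs => ?_
  rw [norm_smul]
  calc ‖k s‖ * ‖G s‖ ≤ ‖k s‖ * C := by
        exact mul_le_mul_of_nonneg_left (hC s (Set.uIoc_subset_uIcc hs)) (norm_nonneg _)
    _ = C * ‖k s‖ := mul_comm _ _

-- aux 2: kernel integrable
lemma aux_kernel_intervalIntegrable {α : ℝ} (hα : 0 < α) (t : ℝ) :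
    IntervalIntegrable (fun s => (t - s) ^ (α - 1)) volume 0 t := by
  have h := (intervalIntegral.intervalIntegrable_rpow' (a := t) (b := 0) (by linarith : (-1:ℝ) < α - 1)).comp_sub_left t
  simpa using h

-- aux 3: gamma tail
lemma aux_gamma_tail {α L t : ℝ} (hα : 0 < α) (hα1 : α < 1) (hL : 0 < L) (ht : 0 ≤ t) :
    ∫ r in (0:ℝ)..t, r ^ (α - 1) * Real.exp (-(L * r)) ≤ (1 / L) ^ α * Real.Gamma α := by
  have hint : IntegrableOn (fun r : ℝ => r ^ (α - 1) * Real.exp (-(L * r))) (Set.Ioi 0) := by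
    have h1 : IntegrableOn (fun r : ℝ => r ^ (α - 1) * Real.exp (-(L * r))) (Set.Ioc 0 1) := by
      have := (intervalIntegral.intervalIntegrable_rpow' (a := 0) (b := 1) (by linarith : (-1:ℝ) < α - 1)).mul_continuousOn
        (Continuous.continuousOn (by continuity : Continuous fun r : ℝ => Real.exp (-(L * r))))
      rw [intervalIntegrable_iff, Set.uIoc_of_le zero_le_one] at this
      exact this
    have h2 : IntegrableOn (fun r : ℝ => r ^ (α - 1) * Real.exp (-(L * r))) (Set.Ioi 1) := by
      have hexp : IntegrableOn (fun r : ℝ => Real.exp (-L * r)) (Set.Ioi 1) :=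
        exp_neg_integrableOn_Ioi 1 hL
      refine hexp.mono' ?_ ?_
      · refine (ContinuousOn.mul ?_ (Continuous.continuousOn (by continuity))).aestronglyMeasurable
          measurableSet_Ioi
        exact ContinuousOn.rpow_const (continuousOn_id) fun r hr => Or.inl (by
          have : (1:ℝ) < r := hr
          positivity)
      · rw [ae_restrict_iff' measurableSet_Ioi]
        refine Filter.Eventually.of_forall fun r hr => ?_
        have h1r : (1:ℝ) ≤ r := le_of_lt hr
        have hrpos : (0:ℝ) < r := lt_of_lt_of_le one_pos h1r
        have : r ^ (α - 1) ≤ 1 := Real.rpow_le_one_of_one_le_of_nonpos h1r (by linarith)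
        rw [norm_mul, Real.norm_eq_abs, Real.norm_eq_abs, abs_of_nonneg (Real.rpow_nonneg hrpos.le _),
          abs_of_nonneg (Real.exp_pos _).le, neg_mul]
        nlinarith [Real.exp_pos (-(L*r))]
    have := h1.union h2
    rwa [Set.Ioc_union_Ioi_eq_Ioi zero_le_one] at this
  rw [← integral_rpow_mul_exp_neg_mul_Ioi hα hL, intervalIntegral.integral_of_le ht]
  refine setIntegral_mono_set hint ?_ (Filter.Eventually.of_forall Set.Ioc_subset_Ioi_self)
  filter_upwards [ae_restrict_mem measurableSet_Ioi] with r hr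
  have : (0:ℝ) < r := hr
  positivity

-- aux 4: change of variables s = t*u
lemma aux_cov {E : Type*} [NormedAddCommGroup E] [NormedSpace ℝ E]
    {α : ℝ} (hα : 0 < α) {t : ℝ} (ht : 0 < t) (G : ℝ → E) :
    ∫ s in (0:ℝ)..t, ((t - s) ^ (α - 1)) • G s
      = (t ^ α) • ∫ u in (0:ℝ)..1, ((1 - u) ^ (α - 1)) • G (t * u) := by
  have h := intervalIntegral.integral_comp_mul_left
      (f := fun s => ((t - s) ^ (α - 1)) • G s) (a := 0) (b := 1) (ne_of_gt ht)
  rw [mul_zero, mul_one] at h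
  have h2 : (∫ u in (0:ℝ)..1, ((t - t*u) ^ (α - 1)) • G (t*u))
      = (t ^ (α-1)) • ∫ u in (0:ℝ)..1, ((1 - u) ^ (α - 1)) • G (t * u) := by
    rw [← intervalIntegral.integral_smul]
    apply intervalIntegral.integral_congr
    intro u hu
    rw [Set.uIcc_of_le zero_le_one] at hu
    have h1u : (0:ℝ) ≤ 1 - u := by linarith [hu.2]
    have he : t - t * u = t * (1 - u) := by ring
    simp only []
    rw [he, Real.mul_rpow ht.le h1u, smul_smul]
  rw [h2] at h
  have h3 := congrArg (fun x : E => t • x) h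
  simp only [smul_smul] at h3
  rw [mul_inv_cancel₀ (ne_of_gt ht), one_smul] at h3
  rw [← h3]
  congr 1
  rw [show α = 1 + (α - 1) by ring, Real.rpow_add ht, Real.rpow_one]
  ring_nf

-- aux 5: continuity of the parametric integral
lemma aux_W_cont {E : Type*} [NormedAddCommGroup E] [NormedSpace ℝ E]
    {α M : ℝ} (hα0 : 0 < α) (G : ℝ → E)
    (hG : Continuous G) (hM : ∀ s, ‖G s‖ ≤ M) :
    Continuous fun t : ℝ => ∫ u in (0:ℝ)..1, ((1 - u) ^ (α - 1)) • G (t * u) := by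
  apply intervalIntegral.continuous_of_dominated_interval
      (bound := fun u => M * (1 - u) ^ (α - 1))
  · intro t
    rw [Set.uIoc_of_le zero_le_one, ← Measure.restrict_congr_set MeasureTheory.Ioo_ae_eq_Ioc]
    refine ContinuousOn.aestronglyMeasurable ?_ measurableSet_Ioo
    refine ContinuousOn.smul ?_ ((hG.comp (continuous_const.mul continuous_id)).continuousOn)
    refine ContinuousOn.rpow_const ?_ fun u hu => Or.inl ?_
    · exact (continuous_const.sub continuous_id).continuousOn
    · have : u < 1 := hu.2
      intro hc
      nlinarith [hc]
  · intro t
    refine Filter.Eventually.of_forall fun u hu => ?_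
    rw [Set.uIoc_of_le zero_le_one] at hu
    have h1u : (0:ℝ) ≤ 1 - u := by linarith [hu.2]
    rw [norm_smul, Real.norm_eq_abs, abs_of_nonneg (Real.rpow_nonneg h1u _)]
    calc (1-u) ^ (α-1) * ‖G (t*u)‖ ≤ (1-u)^(α-1) * M :=
          mul_le_mul_of_nonneg_left (hM _) (Real.rpow_nonneg h1u _)
      _ = M * (1-u)^(α-1) := mul_comm _ _
  · have h := (intervalIntegral.intervalIntegrable_rpow' (a := 1) (b := 0)
      (by linarith : (-1:ℝ) < α - 1)).comp_sub_left 1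
    simpa using (h.const_mul M)
  · refine Filter.Eventually.of_forall fun u _ => ?_
    exact continuous_const.smul (hG.comp (continuous_id.mul continuous_const))

lemma aux_contOn_union_closed {X Y : Type*} [TopologicalSpace X] [TopologicalSpace Y]
    {s t : Set X} {f : X → Y} (hs : IsClosed s) (ht : IsClosed t)
    (h1 : ContinuousOn f s) (h2 : ContinuousOn f t) : ContinuousOn f (s ∪ t) := by
  intro x hx
  rcases hx with hxs | hxt
  · by_cases hxt : x ∈ t
    · exact (h1 x hxs).union (h2 x hxt)
    · exact (h1 x hxs).union
        (continuousWithinAt_of_notMem_closure (by rwa [ht.closure_eq]))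
  · by_cases hxs : x ∈ s
    · exact (h1 x hxs).union (h2 x hxt)
    · exact (continuousWithinAt_of_notMem_closure (by rwa [hs.closure_eq])).union (h2 x hxt)

namespace TemperedAux

noncomputable def gg {n : ℕ} (A B : Matrix (Fin n) (Fin n) ℝ)
    (f : ℝ → (Fin n → ℝ) → (Fin n → ℝ) → Fin n → ℝ) (τ : ℝ)
    (y : ℝ → Fin n → ℝ) (s : ℝ) : Fin n → ℝ :=
  A.mulVec (y s) + B.mulVec (y (s - τ)) + f s (y s) (y (s - τ))

noncomputable def Phi {n : ℕ} (α ρ : ℝ) (ω : ℝ → Fin n → ℝ)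
    (A B : Matrix (Fin n) (Fin n) ℝ)
    (f : ℝ → (Fin n → ℝ) → (Fin n → ℝ) → Fin n → ℝ) (τ : ℝ)
    (y : ℝ → Fin n → ℝ) (t : ℝ) : Fin n → ℝ :=
  if t ≤ 0 then ω t
  else Real.exp (-ρ * t) • ω 0 + (Real.Gamma α)⁻¹ •
    (Real.exp (-ρ * t) • ∫ s in (0:ℝ)..t, ((t - s) ^ (α - 1)) • gg A B f τ y s)

variable {n : ℕ} {α ρ T τ : ℝ}
  {A B : Matrix (Fin n) (Fin n) ℝ}
  {ω : ℝ → Fin n → ℝ}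
  {f : ℝ → (Fin n → ℝ) → (Fin n → ℝ) → Fin n → ℝ}

lemma gg_contOn (hT : 0 < T)
    (hf : ContinuousOn (fun p : ℝ × (Fin n → ℝ) × (Fin n → ℝ) => f p.1 p.2.1 p.2.2)
      (Set.Icc 0 T ×ˢ Set.univ ×ˢ Set.univ))
    {y : ℝ → Fin n → ℝ} (hy : Continuous y) :
    ContinuousOn (gg A B f τ y) (Set.Icc 0 T) := by
  have h1 : Continuous fun s => y (s - τ) := hy.comp (continuous_sub_right τ)
  have hA : Continuous fun s => A.mulVec (y s) := by
    have : Continuous fun x : Fin n → ℝ => A.mulVec x :=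
      (LinearMap.toContinuousLinearMap (Matrix.mulVecLin A)).continuous
    exact this.comp hy
  have hB : Continuous fun s => B.mulVec (y (s - τ)) := by
    have : Continuous fun x : Fin n → ℝ => B.mulVec x :=
      (LinearMap.toContinuousLinearMap (Matrix.mulVecLin B)).continuous
    exact this.comp h1
  have hfc : ContinuousOn (fun s => f s (y s) (y (s - τ))) (Set.Icc 0 T) := by
    have hmap : ∀ s ∈ Set.Icc (0:ℝ) T,
        (s, y s, y (s - τ)) ∈ (Set.Icc 0 T ×ˢ (Set.univ ×ˢ Set.univ) :
          Set (ℝ × (Fin n → ℝ) × (Fin n → ℝ))) := fun s hs => ⟨hs, trivial, trivial⟩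
    exact hf.comp (Continuous.continuousOn
      (continuous_id.prodMk (hy.prodMk h1))) hmap
  exact ((hA.continuousOn.add hB.continuousOn).add hfc)

variable {n : ℕ} {α ρ T τ : ℝ}
  {A B : Matrix (Fin n) (Fin n) ℝ}
  {ω : ℝ → Fin n → ℝ}
  {f : ℝ → (Fin n → ℝ) → (Fin n → ℝ) → Fin n → ℝ}

lemma integrand_intervalIntegrable (hα0 : 0 < α) (hT : 0 < T)
    (hf : ContinuousOn (fun p : ℝ × (Fin n → ℝ) × (Fin n → ℝ) => f p.1 p.2.1 p.2.2)
      (Set.Icc 0 T ×ˢ Set.univ ×ˢ Set.univ))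
    {y : ℝ → Fin n → ℝ} (hy : Continuous y)
    {t : ℝ} (ht : t ∈ Set.Icc (0:ℝ) T) :
    IntervalIntegrable (fun s => ((t - s) ^ (α - 1)) • gg A B f τ y s) volume 0 t :=
  aux_smul_intervalIntegrable (aux_kernel_intervalIntegrable hα0 t)
    ((gg_contOn hT hf hy).mono
      (by rw [Set.uIcc_of_le ht.1]; exact Set.Icc_subset_Icc le_rfl ht.2))

lemma Phi_contOn (hα0 : 0 < α) (hα1 : α < 1) (hT : 0 < T) (hτ : 0 < τ)
    (hω : ContinuousOn ω (Set.Icc (-τ) 0))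
    (hf : ContinuousOn (fun p : ℝ × (Fin n → ℝ) × (Fin n → ℝ) => f p.1 p.2.1 p.2.2)
      (Set.Icc 0 T ×ˢ Set.univ ×ˢ Set.univ))
    {y : ℝ → Fin n → ℝ} (hy : Continuous y) :
    ContinuousOn (Phi α ρ ω A B f τ y) (Set.Icc (-τ) T) := by
  have h0T := gg_contOn (τ := τ) (A := A) (B := B) hT hf hy
  set c : ℝ → ℝ := fun s => max 0 (min s T) with hc
  have hccont : Continuous c := continuous_const.max (continuous_id.min continuous_const)
  have hcmem : ∀ s, c s ∈ Set.Icc (0:ℝ) T := fun s =>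
    ⟨le_max_left _ _, max_le (hT.le) (min_le_right _ _)⟩
  have hceq : ∀ s ∈ Set.Icc (0:ℝ) T, c s = s := fun s hs => by
    rw [hc]; simp only; rw [min_eq_left hs.2, max_eq_right hs.1]
  set Gc : ℝ → Fin n → ℝ := fun s => gg A B f τ y (c s) with hGc
  have hGccont : Continuous Gc := h0T.comp_continuous hccont hcmem
  obtain ⟨M, hM⟩ : ∃ M, ∀ s, ‖Gc s‖ ≤ M := by
    obtain ⟨M, hM⟩ := (isCompact_Icc (a := (0:ℝ)) (b := T)).exists_bound_of_continuousOn h0T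
    exact ⟨M, fun s => hM _ (hcmem s)⟩
  have hWc := aux_W_cont hα0 Gc hGccont hM
  have hFc : Continuous fun t : ℝ => Real.exp (-ρ * t) • ω 0 + (Real.Gamma α)⁻¹ •
      (Real.exp (-ρ * t) •
        ((t ^ α) • ∫ u in (0:ℝ)..1, ((1 - u) ^ (α - 1)) • Gc (t * u))) := by
    have he : Continuous fun t : ℝ => Real.exp (-ρ * t) := by continuity
    have htα : Continuous fun t : ℝ => t ^ α := Real.continuous_rpow_const hα0.le
    exact (he.smul continuous_const).add ((he.smul (htα.smul hWc)).const_smul (Real.Gamma α)⁻¹)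
  have hunion : Set.Icc (-τ) T = Set.Icc (-τ) 0 ∪ Set.Icc 0 T :=
    (Set.Icc_union_Icc_eq_Icc (by linarith) hT.le).symm
  rw [hunion]
  apply aux_contOn_union_closed isClosed_Icc isClosed_Icc
  · exact hω.congr fun t ht => by simp only [Phi]; rw [if_pos ht.2]
  · apply hFc.continuousOn.congr
    intro t ht
    rcases eq_or_lt_of_le ht.1 with h0 | h0
    · simp only [Phi]; rw [if_pos (le_of_eq h0.symm), ← h0]
      simp [Real.zero_rpow (ne_of_gt hα0)]
    · simp only [Phi]; rw [if_neg (not_le.2 h0)]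
      have hcongr : ∀ s ∈ Set.uIcc (0:ℝ) t,
          ((t - s) ^ (α - 1)) • gg A B f τ y s = ((t - s) ^ (α - 1)) • Gc s := by
        intro s hs
        rw [Set.uIcc_of_le h0.le] at hs
        rw [hGc]; simp only
        rw [hceq s ⟨hs.1, le_trans hs.2 ht.2⟩]
      rw [intervalIntegral.integral_congr hcongr, aux_cov hα0 h0 Gc]

end TemperedAux

set_option maxHeartbeats 1000000 in
open TemperedAux in
/-- **Existence and uniqueness of the mild solution of the nonlinear delayed tempered
fractional system.**  Let `α ∈ (0,1)`, `ρ ∈ (0,1]`, `T > 0`, `τ > 0`, `A B` be `n × n` real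
matrices, `ω : [−τ,0] → ℝⁿ` continuous and `f : [0,T] × ℝⁿ × ℝⁿ → ℝⁿ` continuous and
Lipschitz with constant `L_f > 0`.  Then there exists exactly one continuous function
`y : [−τ,T] → ℝⁿ` with `y = ω` on `[−τ,0]` satisfying the tempered integral equation
on `[0,T]`. -/
theorem tempered_system_existence_uniqueness
    {n : ℕ} (α ρ T τ Lf : ℝ)
    (hα : α ∈ Set.Ioo (0:ℝ) 1) (hρ : ρ ∈ Set.Ioc (0:ℝ) 1) (hT : 0 < T) (hτ : 0 < τ)
    (hLf : 0 < Lf)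
    (A B : Matrix (Fin n) (Fin n) ℝ)
    (ω : ℝ → Fin n → ℝ) (hω : ContinuousOn ω (Set.Icc (-τ) 0))
    (f : ℝ → (Fin n → ℝ) → (Fin n → ℝ) → Fin n → ℝ)
    (hf : ContinuousOn (fun p : ℝ × (Fin n → ℝ) × (Fin n → ℝ) => f p.1 p.2.1 p.2.2)
      (Set.Icc 0 T ×ˢ Set.univ ×ˢ Set.univ))
    (hlip : ∀ t ∈ Set.Icc (0:ℝ) T, ∀ u v u' v' : Fin n → ℝ,
      ‖f t u v - f t u' v'‖ ≤ Lf * (‖u - u'‖ + ‖v - v'‖)) :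
    ∃ y : ℝ → Fin n → ℝ,
      (ContinuousOn y (Set.Icc (-τ) T) ∧
        (∀ t ∈ Set.Icc (-τ) (0:ℝ), y t = ω t) ∧
        ∀ t ∈ Set.Icc (0:ℝ) T,
          y t = Real.exp (-ρ * t) • ω 0 + (Real.Gamma α)⁻¹ •
            ∫ s in (0:ℝ)..t,
              (Real.exp (-ρ * (t - s)) * Real.exp (-ρ * s) * (t - s) ^ (α - 1)) •
                (A.mulVec (y s) + B.mulVec (y (s - τ)) + f s (y s) (y (s - τ)))) ∧
      ∀ z : ℝ → Fin n → ℝ,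
        (ContinuousOn z (Set.Icc (-τ) T) ∧
          (∀ t ∈ Set.Icc (-τ) (0:ℝ), z t = ω t) ∧
          ∀ t ∈ Set.Icc (0:ℝ) T,
            z t = Real.exp (-ρ * t) • ω 0 + (Real.Gamma α)⁻¹ •
              ∫ s in (0:ℝ)..t,
                (Real.exp (-ρ * (t - s)) * Real.exp (-ρ * s) * (t - s) ^ (α - 1)) •
                  (A.mulVec (z s) + B.mulVec (z (s - τ)) + f s (z s) (z (s - τ)))) →
        Set.EqOn y z (Set.Icc (-τ) T) := by
  obtain ⟨hα0, hα1⟩ := hα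
  obtain ⟨hρ0, hρ1⟩ := hρ
  have hτT : (-τ) ≤ T := by linarith
  have hΓ : 0 < Real.Gamma α := Real.Gamma_pos_of_pos hα0
  -- matrix operator norms
  set CA := ‖LinearMap.toContinuousLinearMap (Matrix.mulVecLin A)‖ with hCAdef
  set CB := ‖LinearMap.toContinuousLinearMap (Matrix.mulVecLin B)‖ with hCBdef
  have hCA0 : 0 ≤ CA := norm_nonneg _
  have hCB0 : 0 ≤ CB := norm_nonneg _
  have hAle : ∀ x : Fin n → ℝ, ‖A.mulVec x‖ ≤ CA * ‖x‖ := fun x => by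
    have h := (LinearMap.toContinuousLinearMap (Matrix.mulVecLin A)).le_opNorm x
    simpa [Matrix.mulVecLin_apply] using h
  have hBle : ∀ x : Fin n → ℝ, ‖B.mulVec x‖ ≤ CB * ‖x‖ := fun x => by
    have h := (LinearMap.toContinuousLinearMap (Matrix.mulVecLin B)).le_opNorm x
    simpa [Matrix.mulVecLin_apply] using h
  set K := CA + CB + Lf with hKdef
  have hK0 : 0 < K := by positivity
  set L : ℝ := max 1 ((4*K) ^ (α⁻¹)) with hLdef
  have hL1 : (1:ℝ) ≤ L := le_max_left _ _
  have hL0 : 0 < L := lt_of_lt_of_le one_pos hL1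
  have hLα : 4*K ≤ L ^ α := by
    have h1 : (4*K) ^ (α⁻¹) ≤ L := le_max_right _ _
    have h2 : ((4*K) ^ (α⁻¹)) ^ α ≤ L ^ α :=
      Real.rpow_le_rpow (Real.rpow_nonneg (by positivity) _) h1 hα0.le
    rwa [← Real.rpow_mul (by positivity), inv_mul_cancel₀ (ne_of_gt hα0),
      Real.rpow_one] at h2
  have hLαpos : 0 < L ^ α := Real.rpow_pos_of_pos hL0 α
  -- exp-kernel rewriting
  have hF5 : ∀ (y : ℝ → Fin n → ℝ) (t : ℝ),
      (∫ s in (0:ℝ)..t, (Real.exp (-ρ*(t-s)) * Real.exp (-ρ*s) * (t-s)^(α-1)) •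
          gg A B f τ y s)
        = Real.exp (-ρ*t) • ∫ s in (0:ℝ)..t, ((t-s)^(α-1)) • gg A B f τ y s := by
    intro y t
    have hfun : (fun s => (Real.exp (-ρ*(t-s)) * Real.exp (-ρ*s) * (t-s)^(α-1)) •
          gg A B f τ y s)
        = fun s => Real.exp (-ρ*t) • (((t-s)^(α-1)) • gg A B f τ y s) := by
      funext s
      rw [smul_smul, ← Real.exp_add, show -ρ*(t-s) + -ρ*s = -ρ*t from by ring]
    rw [hfun, intervalIntegral.integral_smul]
  -- the space of continuous functions on [-τ, T]
  haveI : CompactSpace (Set.Icc (-τ) T) := isCompact_iff_compactSpace.mp isCompact_Icc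
  haveI : Nonempty (Set.Icc (-τ) T) := Set.Nonempty.to_subtype (Set.nonempty_Icc.2 hτT)
  let X := ContinuousMap (Set.Icc (-τ) T) (Fin n → ℝ)
  haveI : Nonempty X := ⟨ContinuousMap.const _ 0⟩
  let ext : X → ℝ → (Fin n → ℝ) := fun u t => u (Set.projIcc (-τ) T hτT t)
  have hext_cont : ∀ u : X, Continuous (ext u) := fun u =>
    u.continuous.comp continuous_projIcc
  have hext_eq : ∀ (u : X) {t : ℝ} (ht : t ∈ Set.Icc (-τ) T), ext u t = u ⟨t, ht⟩ := by
    intro u t ht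
    simp only [ext]
    rw [Set.projIcc_of_mem hτT ht]
  have hext_le : ∀ (u v : X) (t : ℝ), ‖ext u t - ext v t‖ ≤ dist u v := fun u v t => by
    rw [← dist_eq_norm]; exact ContinuousMap.dist_apply_le_dist _
  let Y : X → ℝ → (Fin n → ℝ) := fun u t => Real.exp (L * t) • ext u t
  have hY_cont : ∀ u, Continuous (Y u) := fun u =>
    (Real.continuous_exp.comp (continuous_const.mul continuous_id)).smul (hext_cont u)
  have hYmem : ∀ (u : X) {t : ℝ} (ht : t ∈ Set.Icc (-τ) T),
      Y u t = Real.exp (L * t) • u ⟨t, ht⟩ := by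
    intro u t ht; simp only [Y]; rw [hext_eq u ht]
  -- the operator
  let 𝒯 : X → X := fun u =>
    ⟨fun x => Real.exp (-(L * (x:ℝ))) • Phi α ρ ω A B f τ (Y u) (x:ℝ), by
      refine Continuous.smul (f := fun x : Set.Icc (-τ) T => Real.exp (-(L * (x:ℝ))))
        (g := fun x : Set.Icc (-τ) T => Phi α ρ ω A B f τ (Y u) (x:ℝ)) ?_ ?_
      · exact Real.continuous_exp.comp (continuous_const.mul continuous_subtype_val).neg
      · exact (Phi_contOn hα0 hα1 hT hτ hω hf (hY_cont u)).restrict⟩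
  have h𝒯app : ∀ (u : X) (x : Set.Icc (-τ) T),
      𝒯 u x = Real.exp (-(L * (x:ℝ))) • Phi α ρ ω A B f τ (Y u) (x:ℝ) := fun u x => rfl
  -- the pointwise contraction estimate
  have hcore : ∀ u v : X, ∀ x : Set.Icc (-τ) T,
      dist (𝒯 u x) (𝒯 v x) ≤ (1/2) * dist u v := by
    intro u v x
    obtain ⟨t, htI⟩ := x
    rw [h𝒯app, h𝒯app]
    rw [dist_eq_norm, ← smul_sub, norm_smul, Real.norm_eq_abs, Real.abs_exp]
    set D := dist u v with hDdef
    have hD0 : 0 ≤ D := dist_nonneg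
    by_cases ht0 : t ≤ 0
    · have hzero : Phi α ρ ω A B f τ (Y u) t - Phi α ρ ω A B f τ (Y v) t = 0 := by
        simp only [Phi]; rw [if_pos ht0, if_pos ht0, sub_self]
      rw [hzero, norm_zero, mul_zero]
      exact mul_nonneg (by norm_num) hD0
    · push_neg at ht0
      have htT : t ≤ T := htI.2
      have hiu := integrand_intervalIntegrable (τ := τ) (A := A) (B := B)
        hα0 hT hf (hY_cont u) ⟨ht0.le, htT⟩
      have hiv := integrand_intervalIntegrable (τ := τ) (A := A) (B := B)
        hα0 hT hf (hY_cont v) ⟨ht0.le, htT⟩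
      have hsub : Phi α ρ ω A B f τ (Y u) t - Phi α ρ ω A B f τ (Y v) t
          = (Real.Gamma α)⁻¹ • (Real.exp (-ρ * t) •
            ∫ s in (0:ℝ)..t, ((t - s) ^ (α - 1)) •
              (gg A B f τ (Y u) s - gg A B f τ (Y v) s)) := by
        simp only [Phi]
        rw [if_neg (not_le.2 ht0), if_neg (not_le.2 ht0), add_sub_add_left_eq_sub,
          ← smul_sub, ← smul_sub, ← intervalIntegral.integral_sub hiu hiv]
        simp only [← smul_sub]
      rw [hsub, norm_smul, norm_smul, Real.norm_eq_abs, Real.norm_eq_abs,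
        abs_of_pos (inv_pos.2 hΓ), Real.abs_exp]
      -- bound the integral
      have hYd : ∀ r : ℝ, ‖Y u r - Y v r‖ ≤ Real.exp (L * r) * D := fun r => by
        simp only [Y]
        rw [← smul_sub, norm_smul, Real.norm_eq_abs, Real.abs_exp]
        exact mul_le_mul_of_nonneg_left (hext_le u v r) (Real.exp_pos _).le
      have hbound : ‖∫ s in (0:ℝ)..t, ((t - s) ^ (α - 1)) •
            (gg A B f τ (Y u) s - gg A B f τ (Y v) s)‖
          ≤ (2*K*D) * (Real.exp (L*t) * ((1/L)^α * Real.Gamma α)) := by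
        have hg0 : IntervalIntegrable
            (fun s => (t - s)^(α-1) * ((2*K*D) * Real.exp (L*s))) volume 0 t :=
          (aux_kernel_intervalIntegrable hα0 t).mul_continuousOn
            (Continuous.continuousOn (continuous_const.mul
              (Real.continuous_exp.comp (continuous_const.mul continuous_id))))
        have h1 := intervalIntegral.norm_integral_le_abs_of_norm_le (μ := volume)
          (f := fun s => ((t - s) ^ (α - 1)) •
            (gg A B f τ (Y u) s - gg A B f τ (Y v) s))
          (g := fun s => (t - s)^(α-1) * ((2*K*D) * Real.exp (L*s))) ?_ hg0
        · refine h1.trans ?_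
          rw [abs_of_nonneg (intervalIntegral.integral_nonneg ht0.le fun s hs => by
            have h1 : (0:ℝ) ≤ t - s := by linarith [hs.2]
            have h2 : (0:ℝ) ≤ 2*K*D := by positivity
            positivity)]
          have hre : ∀ s ∈ Set.uIcc (0:ℝ) t,
              (t - s)^(α-1) * ((2*K*D) * Real.exp (L*s))
              = (2*K*D*Real.exp (L*t)) *
                ((fun r => r^(α-1) * Real.exp (-(L*r))) (t - s)) := by
            intro s _
            simp only
            rw [show L*s = L*t + -(L*(t-s)) from by ring, Real.exp_add]
            ring
          rw [intervalIntegral.integral_congr hre, intervalIntegral.integral_const_mul]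
          have hsub2 : (∫ s in (0:ℝ)..t, (fun r => r^(α-1) * Real.exp (-(L*r))) (t - s))
              = ∫ r in (0:ℝ)..t, r^(α-1) * Real.exp (-(L*r)) := by
            have h := intervalIntegral.integral_comp_sub_left (a := (0:ℝ)) (b := t)
              (fun r => r^(α-1) * Real.exp (-(L*r))) t
            simpa using h
          rw [hsub2]
          calc (2*K*D*Real.exp (L*t)) * ∫ r in (0:ℝ)..t, r^(α-1)*Real.exp (-(L*r))
              ≤ (2*K*D*Real.exp (L*t)) * ((1/L)^α * Real.Gamma α) := by
                apply mul_le_mul_of_nonneg_left (aux_gamma_tail hα0 hα1 hL0 ht0.le)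
                have : (0:ℝ) ≤ 2*K*D := by positivity
                positivity
            _ = (2*K*D) * (Real.exp (L*t) * ((1/L)^α * Real.Gamma α)) := by ring
        · rw [Set.uIoc_of_le ht0.le]
          filter_upwards [ae_restrict_mem measurableSet_Ioc] with s hs
          have hts : (0:ℝ) ≤ t - s := by linarith [hs.2]
          rw [norm_smul, Real.norm_eq_abs, abs_of_nonneg (Real.rpow_nonneg hts _)]
          apply mul_le_mul_of_nonneg_left _ (Real.rpow_nonneg hts _)
          -- core Lipschitz estimate
          have hYd2 : ‖Y u (s - τ) - Y v (s - τ)‖ ≤ Real.exp (L * s) * D := by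
            refine (hYd (s - τ)).trans ?_
            have hee : Real.exp (L * (s - τ)) ≤ Real.exp (L * s) := by
              apply Real.exp_le_exp.2
              nlinarith [hτ.le, hL0.le]
            exact mul_le_mul_of_nonneg_right hee hD0
          have hdec : gg A B f τ (Y u) s - gg A B f τ (Y v) s =
              A.mulVec (Y u s - Y v s) + (B.mulVec (Y u (s-τ) - Y v (s-τ)) +
                (f s (Y u s) (Y u (s-τ)) - f s (Y v s) (Y v (s-τ)))) := by
            simp only [gg, Matrix.mulVec_sub]
            abel
          rw [hdec]
          have hsmem : s ∈ Set.Icc (0:ℝ) T := ⟨hs.1.le, le_trans hs.2 htT⟩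
          have hfb := hlip s hsmem (Y u s) (Y u (s-τ)) (Y v s) (Y v (s-τ))
          set E := Real.exp (L*s) * D with hEdef
          have hE0 : 0 ≤ E := mul_nonneg (Real.exp_pos _).le hD0
          have h1 : ‖A.mulVec (Y u s - Y v s)‖ ≤ CA * E :=
            (hAle _).trans (mul_le_mul_of_nonneg_left (hYd s) hCA0)
          have h2 : ‖B.mulVec (Y u (s-τ) - Y v (s-τ))‖ ≤ CB * E :=
            (hBle _).trans (mul_le_mul_of_nonneg_left hYd2 hCB0)
          have h3 : ‖f s (Y u s) (Y u (s-τ)) - f s (Y v s) (Y v (s-τ))‖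
              ≤ Lf * (E + E) :=
            hfb.trans (mul_le_mul_of_nonneg_left (add_le_add (hYd s) hYd2) hLf.le)
          have htri := norm_add_le (A.mulVec (Y u s - Y v s))
            (B.mulVec (Y u (s-τ) - Y v (s-τ)) +
              (f s (Y u s) (Y u (s-τ)) - f s (Y v s) (Y v (s-τ))))
          have htri2 := norm_add_le (B.mulVec (Y u (s-τ) - Y v (s-τ)))
            (f s (Y u s) (Y u (s-τ)) - f s (Y v s) (Y v (s-τ)))
          have hgoal : 2*K*D*Real.exp (L*s) = 2*K*E := by rw [hEdef]; ring
          rw [hgoal, hKdef]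
          have h4 : 0 ≤ CA * E := mul_nonneg hCA0 hE0
          have h5 : 0 ≤ CB * E := mul_nonneg hCB0 hE0
          nlinarith [h1, h2, h3, htri, htri2, h4, h5]
      -- final assembly
      have hexp1 : Real.exp (-ρ * t) ≤ 1 := by
        rw [Real.exp_le_one_iff]
        nlinarith [hρ0.le, ht0.le]
      calc Real.exp (-(L*t)) * ((Real.Gamma α)⁻¹ * (Real.exp (-ρ*t) *
              ‖∫ s in (0:ℝ)..t, ((t - s) ^ (α - 1)) •
                (gg A B f τ (Y u) s - gg A B f τ (Y v) s)‖))
          ≤ Real.exp (-(L*t)) * ((Real.Gamma α)⁻¹ *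
              (1 * ((2*K*D) * (Real.exp (L*t) * ((1/L)^α * Real.Gamma α))))) := by
            apply mul_le_mul_of_nonneg_left _ (Real.exp_pos _).le
            apply mul_le_mul_of_nonneg_left _ (inv_pos.2 hΓ).le
            apply mul_le_mul hexp1 hbound (norm_nonneg _) zero_le_one
        _ = (2*K*((1/L)^α)) * D * ((Real.exp (-(L*t)) * Real.exp (L*t)) *
              ((Real.Gamma α)⁻¹ * Real.Gamma α)) := by ring
        _ = (2*K*((1/L)^α)) * D := by
            rw [← Real.exp_add, neg_add_cancel, Real.exp_zero,
              inv_mul_cancel₀ (ne_of_gt hΓ), one_mul, mul_one]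
        _ ≤ (1/2) * D := by
            apply mul_le_mul_of_nonneg_right _ hD0
            rw [one_div, Real.inv_rpow hL0.le]
            rw [mul_inv_le_iff₀ hLαpos]
            linarith [hLα]
  -- contraction
  have hcontr : ContractingWith (1/2 : NNReal) 𝒯 := by
    constructor
    · rw [← NNReal.coe_lt_coe]; norm_num
    · apply LipschitzWith.of_dist_le_mul
      intro u v
      have hc : ((1/2 : NNReal) : ℝ) = 1/2 := by norm_num
      rw [hc, ContinuousMap.dist_le (mul_nonneg (by norm_num) dist_nonneg)]
      exact fun x => hcore u v x
  -- fixed point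
  set ustar := ContractingWith.fixedPoint 𝒯 hcontr with hustar
  have hfix : 𝒯 ustar = ustar := hcontr.fixedPoint_isFixedPt
  set y : ℝ → Fin n → ℝ := Y ustar with hy
  have hyPhi : ∀ t (ht : t ∈ Set.Icc (-τ) T), y t = Phi α ρ ω A B f τ y t := by
    intro t ht
    have h1 : (𝒯 ustar) ⟨t, ht⟩ = ustar ⟨t, ht⟩ := by rw [hfix]
    rw [hy, hYmem ustar ht, ← h1, h𝒯app, smul_smul, ← Real.exp_add, add_neg_cancel,
      Real.exp_zero, one_smul]
  -- the integral equation in statement form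
  have hstmt : ∀ (w : ℝ → Fin n → ℝ) (t : ℝ), 0 < t →
      (Real.exp (-ρ * t) • ω 0 + (Real.Gamma α)⁻¹ •
        ∫ s in (0:ℝ)..t,
          (Real.exp (-ρ * (t - s)) * Real.exp (-ρ * s) * (t - s) ^ (α - 1)) •
            (A.mulVec (w s) + B.mulVec (w (s - τ)) + f s (w s) (w (s - τ))))
      = Phi α ρ ω A B f τ w t := by
    intro w t ht0
    simp only [Phi, gg]
    rw [if_neg (not_le.2 ht0)]
    have h := hF5 w t
    simp only [gg] at h
    rw [h]
  refine ⟨y, ⟨(hY_cont ustar).continuousOn, ?_, ?_⟩, ?_⟩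
  · -- boundary condition
    intro t ht
    have htI : t ∈ Set.Icc (-τ) T := ⟨ht.1, le_trans ht.2 hT.le⟩
    rw [hyPhi t htI]
    simp only [Phi]
    rw [if_pos ht.2]
  · -- integral equation
    intro t ht
    rcases eq_or_lt_of_le ht.1 with h0 | h0
    · rw [hyPhi t ⟨by linarith [ht.1], ht.2⟩]
      simp only [Phi]
      rw [if_pos (le_of_eq h0.symm), ← h0]
      simp [intervalIntegral.integral_same]
    · rw [hyPhi t ⟨by linarith, ht.2⟩, hstmt y t h0]
  · -- uniqueness
    rintro z ⟨hz1, hz2, hz3⟩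
    set uz : X := ⟨fun x => Real.exp (-(L * (x:ℝ))) • z (x:ℝ), by
      refine Continuous.smul (f := fun x : Set.Icc (-τ) T => Real.exp (-(L * (x:ℝ))))
        (g := fun x : Set.Icc (-τ) T => z (x:ℝ)) ?_ hz1.restrict
      exact Real.continuous_exp.comp (continuous_const.mul continuous_subtype_val).neg⟩
      with huz
    have hYz : ∀ r (hr : r ∈ Set.Icc (-τ) T), Y uz r = z r := by
      intro r hr
      rw [hYmem uz hr]
      show Real.exp (L*r) • (Real.exp (-(L * r)) • z r) = z r
      rw [smul_smul, ← Real.exp_add, add_neg_cancel, Real.exp_zero, one_smul]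
    have huzfix : 𝒯 uz = uz := by
      apply ContinuousMap.ext
      rintro ⟨t, htI⟩
      rw [h𝒯app]
      show _ = Real.exp (-(L * t)) • z t
      congr 1
      by_cases ht0 : t ≤ 0
      · simp only [Phi]
        rw [if_pos ht0]
        exact (hz2 t ⟨htI.1, ht0⟩).symm
      · push_neg at ht0
        rw [← hstmt (Y uz) t ht0]
        have hcong : ∀ s ∈ Set.uIcc (0:ℝ) t,
            (Real.exp (-ρ * (t - s)) * Real.exp (-ρ * s) * (t - s) ^ (α - 1)) •
              (A.mulVec (Y uz s) + B.mulVec (Y uz (s - τ)) +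
                f s (Y uz s) (Y uz (s - τ)))
            = (Real.exp (-ρ * (t - s)) * Real.exp (-ρ * s) * (t - s) ^ (α - 1)) •
              (A.mulVec (z s) + B.mulVec (z (s - τ)) + f s (z s) (z (s - τ))) := by
          intro s hs
          rw [Set.uIcc_of_le ht0.le] at hs
          have hsI : s ∈ Set.Icc (-τ) T := ⟨by linarith [hs.1], le_trans hs.2 htI.2⟩
          have hsτI : s - τ ∈ Set.Icc (-τ) T :=
            ⟨by linarith [hs.1], by linarith [le_trans hs.2 htI.2]⟩
          rw [hYz s hsI, hYz (s-τ) hsτI]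
        rw [intervalIntegral.integral_congr hcong, ← hz3 t ⟨ht0.le, htI.2⟩]
    have huzeq : uz = ustar := hcontr.fixedPoint_unique huzfix
    intro t ht
    show y t = z t
    rw [hy, hYmem ustar ht, ← huzeq]
    show Real.exp (L*t) • (Real.exp (-(L * t)) • z t) = z t
    rw [smul_smul, ← Real.exp_add, add_neg_cancel, Real.exp_zero, one_smul]
end
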